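/- Let b : (0,∞) → ℂ be a bounded measurable function having finite limits b₀ = lim_{y→0⁺} b(y) and b_∞ = lim_{y→+∞} b(y). Define γ^b : (0,∞) → M_n(ℂ) by γ^b(x₂) = ∫₀^∞ b(y/(2x₂)) N(y)[N(y)]^T dy. Then lim_{x₂→0⁺} γ^b(x₂) = b_∞·I and lim_{x₂→+∞} γ^b(x₂) = b₀·I (entrywise limits, I the n×n identity matrix). -/

import Mathlib

/-!
Expanding Rodrigues' formula by the Leibniz rule gives
`L_m(y) = ∑_{i ≤ m} (-1)^i C(m,i) y^i / i!`. With the moments `∫₀^∞ y^p e^{-y} dy = p!` this turns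
`∫₀^∞ y^i L_k(y) e^{-y} dy` into `i!` times an alternating binomial sum, a `k`-th forward difference
of `x ↦ C(x,i)`, which equals `(-1)^k i! C(i,k)` and so vanishes for `i < k`. Hence the `ℓ_m` are
orthonormal on `(0,∞)`. Since `y/(2x₂)` tends to `+∞` as `x₂ → 0⁺` and to `0⁺` as `x₂ → +∞`,
dominated convergence (the integrand is bounded by `C |ℓ_j ℓ_k|` when `|b| ≤ C`) sends the
`(j,k)` entry of `γ^b` to `b_∞ δ_jk`, resp. `b₀ δ_jk`.
-/

open MeasureTheory Filter Topology

noncomputable section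

/-- The Laguerre polynomial `L_m(y) = (e^y/m!) (d/dy)^m (e^{−y} y^m)`. -/
def laguerreL (m : ℕ) (y : ℝ) : ℝ :=
  Real.exp y / m.factorial * iteratedDeriv m (fun x => Real.exp (-x) * x ^ m) y

/-- The Laguerre function `ℓ_m(y) = (−1)^m L_m(y) e^{−y/2}`. -/
def laguerreFun (m : ℕ) (y : ℝ) : ℝ :=
  (-1 : ℝ) ^ m * laguerreL m y * Real.exp (-y / 2)

/-- The matrix `N(y)[N(y)]ᵀ`, where `N(y) = (ℓ_0(y), …, ℓ_{n−1}(y))ᵀ`. -/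
def NNT (n : ℕ) (y : ℝ) : Matrix (Fin n) (Fin n) ℝ :=
  Matrix.of fun j k : Fin n => laguerreFun j y * laguerreFun k y

/-- `γ^b(x₂) = ∫₀^∞ b(y/(2x₂)) N(y)[N(y)]ᵀ dy`, as a complex `n × n` matrix. -/
def gammaB (n : ℕ) (b : ℝ → ℂ) (x₂ : ℝ) : Matrix (Fin n) (Fin n) ℂ :=
  Matrix.of fun j k : Fin n =>
    ∫ y in Set.Ioi (0 : ℝ), b (y / (2 * x₂)) * (NNT n y j k : ℂ)

open Finset

theorem neg_one_pow_sub_of_le {R : Type*} [CommRing R] {k l : ℕ} (h : l ≤ k) :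
    (-1 : R) ^ (k - l) = (-1) ^ k * (-1) ^ l := by
  obtain ⟨d, rfl⟩ := Nat.exists_eq_add_of_le h
  rw [Nat.add_sub_cancel_left, pow_add, mul_right_comm, ← pow_add, Even.neg_one_pow ⟨l, rfl⟩,
    one_mul]

theorem fwdDiff_iter_choose_apply (k i : ℕ) :
    (fwdDiff 1)^[k] (fun x : ℕ => (x.choose i : ℤ)) i = i.choose k := by
  rcases le_or_gt k i with hki | hik
  · obtain ⟨j, rfl⟩ := Nat.exists_eq_add_of_le hki
    rw [fwdDiff_iter_choose j k, Nat.choose_symm_add]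
  · obtain ⟨j, rfl⟩ := Nat.exists_eq_add_of_lt hik
    have hconst : (fwdDiff 1)^[i] (fun x : ℕ => (x.choose i : ℤ)) = fun _ => 1 := by
      simpa using fwdDiff_iter_choose 0 i
    rw [Nat.choose_eq_zero_of_lt (by omega), show i + j + 1 = j + 1 + i by ring,
      Function.iterate_add_apply, hconst, Function.iterate_succ_apply, fwdDiff_const]
    simp [fwdDiff_iter_eq_sum_shift]

theorem sum_range_neg_one_pow_mul_choose_mul_add_choose (k i : ℕ) :
    ∑ l ∈ range (k + 1), (-1 : ℤ) ^ l * k.choose l * (i + l).choose i =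
      (-1) ^ k * i.choose k := by
  rw [← fwdDiff_iter_choose_apply, fwdDiff_iter_eq_sum_shift, mul_sum]
  refine sum_congr rfl fun l hl => ?_
  rw [neg_one_pow_sub_of_le (Nat.lt_succ_iff.mp (mem_range.mp hl)), smul_eq_mul, nsmul_one,
    Nat.cast_id, ← mul_assoc, ← mul_assoc, ← mul_assoc, ← pow_add, Even.neg_one_pow ⟨k, rfl⟩,
    one_mul]

theorem laguerreL_eq_sum (m : ℕ) (y : ℝ) :
    laguerreL m y = ∑ i ∈ range (m + 1), (-1) ^ i * m.choose i / i.factorial * y ^ i := by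
  have hexp : ContDiffAt ℝ m (fun x => Real.exp (-x)) y := by fun_prop
  have hpow : ContDiffAt ℝ m (fun x : ℝ => x ^ m) y := by fun_prop
  have hexp_deriv (i : ℕ) :
      iteratedDeriv i (fun x => Real.exp (-x)) y = (-1) ^ i * Real.exp (-y) := by
    simpa using congrFun (iteratedDeriv_exp_const_mul i (-1)) y
  rw [laguerreL, iteratedDeriv_fun_mul hexp hpow, mul_sum]
  refine sum_congr rfl fun i hi => ?_
  have him : i ≤ m := Nat.lt_succ_iff.mp (mem_range.mp hi)
  have hfact : ((m - (m - i)).factorial * m.descFactorial (m - i) : ℝ) = m.factorial := by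
    exact_mod_cast Nat.factorial_mul_descFactorial (Nat.sub_le m i)
  rw [Nat.sub_sub_self him] at hfact
  rw [hexp_deriv, iteratedDeriv_pow, Nat.sub_sub_self him, ← hfact, Real.exp_neg]
  field_simp

open Set

theorem integrableOn_pow_mul_exp_neg (p : ℕ) :
    IntegrableOn (fun y : ℝ => y ^ p * Real.exp (-y)) (Ioi 0) := by
  refine (Real.GammaIntegral_convergent (s := p + 1) (by positivity)).congr_fun
    (fun y _ => ?_) measurableSet_Ioi
  simp [mul_comm]

theorem integral_pow_mul_exp_neg (p : ℕ) :
    ∫ y in Ioi (0 : ℝ), y ^ p * Real.exp (-y) = p.factorial := by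
  rw [← Real.Gamma_nat_eq_factorial, Real.Gamma_eq_integral (by positivity)]
  refine setIntegral_congr_fun measurableSet_Ioi fun y _ => ?_
  simp [mul_comm]

theorem pow_mul_laguerreL_mul_exp_neg_eq_sum (i k : ℕ) (y : ℝ) :
    y ^ i * laguerreL k y * Real.exp (-y) =
      ∑ l ∈ range (k + 1), (-1) ^ l * k.choose l / l.factorial * (y ^ (i + l) * Real.exp (-y)) := by
  rw [laguerreL_eq_sum, mul_sum, sum_mul]
  exact sum_congr rfl fun l _ => by ring

theorem integrableOn_pow_mul_laguerreL_mul_exp_neg (i k : ℕ) :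
    IntegrableOn (fun y => y ^ i * laguerreL k y * Real.exp (-y)) (Ioi 0) := by
  simp_rw [pow_mul_laguerreL_mul_exp_neg_eq_sum]
  exact integrable_finsetSum _ fun l _ => (integrableOn_pow_mul_exp_neg _).const_mul _

theorem integral_pow_mul_laguerreL_mul_exp_neg (i k : ℕ) :
    ∫ y in Ioi (0 : ℝ), y ^ i * laguerreL k y * Real.exp (-y) =
      (-1) ^ k * i.factorial * i.choose k := by
  simp_rw [pow_mul_laguerreL_mul_exp_neg_eq_sum]
  rw [integral_finsetSum _ fun l _ => (integrableOn_pow_mul_exp_neg _).const_mul _]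
  simp_rw [integral_const_mul, integral_pow_mul_exp_neg]
  have hsum : ∑ l ∈ range (k + 1), (-1 : ℝ) ^ l * k.choose l * (i + l).choose i =
      (-1) ^ k * i.choose k := by
    exact_mod_cast sum_range_neg_one_pow_mul_choose_mul_add_choose k i
  rw [mul_right_comm, ← hsum, sum_mul]
  refine sum_congr rfl fun l _ => ?_
  have hfact : ((i + l).choose i * i.factorial * l.factorial : ℝ) = (i + l).factorial := by
    rw [Nat.choose_symm_add]
    exact_mod_cast Nat.add_choose_mul_factorial_mul_factorial i l
  rw [← hfact]
  field_simp

theorem laguerreFun_mul_laguerreFun_eq_sum (j k : ℕ) (y : ℝ) :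
    laguerreFun j y * laguerreFun k y =
      ∑ i ∈ range (j + 1), (-1) ^ (j + k) * ((-1) ^ i * j.choose i / i.factorial) *
        (y ^ i * laguerreL k y * Real.exp (-y)) := by
  have hexp : Real.exp (-y / 2) * Real.exp (-y / 2) = Real.exp (-y) := by
    rw [← Real.exp_add, add_halves]
  simp only [laguerreFun, laguerreL_eq_sum j, mul_sum, sum_mul]
  refine sum_congr rfl fun i _ => ?_
  rw [← hexp]
  ring

theorem integrableOn_laguerreFun_mul_laguerreFun (j k : ℕ) :
    IntegrableOn (fun y => laguerreFun j y * laguerreFun k y) (Ioi 0) := by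
  simp_rw [laguerreFun_mul_laguerreFun_eq_sum]
  exact integrable_finsetSum _ fun i _ =>
    (integrableOn_pow_mul_laguerreL_mul_exp_neg i k).const_mul _

theorem integral_laguerreFun_mul_laguerreFun_of_le {j k : ℕ} (hjk : j ≤ k) :
    ∫ y in Ioi (0 : ℝ), laguerreFun j y * laguerreFun k y = if j = k then 1 else 0 := by
  simp_rw [laguerreFun_mul_laguerreFun_eq_sum]
  rw [integral_finsetSum _ fun i _ =>
    (integrableOn_pow_mul_laguerreL_mul_exp_neg i k).const_mul _]
  simp_rw [integral_const_mul, integral_pow_mul_laguerreL_mul_exp_neg]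
  rcases hjk.lt_or_eq with hlt | rfl
  · rw [if_neg hlt.ne]
    refine sum_eq_zero fun i hi => ?_
    have hik : i.choose k = 0 := Nat.choose_eq_zero_of_lt (by grind)
    simp [hik]
  · rw [if_pos rfl, sum_range_succ, sum_eq_zero fun i hi => ?_, zero_add]
    · simp only [Nat.choose_self, Nat.cast_one, mul_one]
      field_simp
      rw [← pow_mul, ← pow_add]
      exact Even.neg_one_pow ⟨2 * j, by ring⟩
    · simp [Nat.choose_eq_zero_of_lt (Finset.mem_range.mp hi)]

theorem integral_laguerreFun_mul_laguerreFun (j k : ℕ) :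
    ∫ y in Ioi (0 : ℝ), laguerreFun j y * laguerreFun k y = if j = k then 1 else 0 := by
  rcases le_total j k with hjk | hkj
  · exact integral_laguerreFun_mul_laguerreFun_of_le hjk
  · simp only [mul_comm (laguerreFun j _), @eq_comm _ j k]
    exact integral_laguerreFun_mul_laguerreFun_of_le hkj

theorem tendsto_integral_mul_of_norm_le {α ι 𝕜 : Type*} [MeasurableSpace α] [RCLike 𝕜]
    {μ : Measure α} {l : Filter ι} [l.IsCountablyGenerated] {F : ι → α → 𝕜} {g : α → 𝕜}
    {c : 𝕜} {C : ℝ} (hF_meas : ∀ᶠ i in l, AEStronglyMeasurable (F i) μ)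
    (hF_le : ∀ᶠ i in l, ∀ᵐ a ∂μ, ‖F i a‖ ≤ C) (hg : Integrable g μ)
    (hF_lim : ∀ᵐ a ∂μ, Tendsto (fun i => F i a) l (𝓝 c)) :
    Tendsto (fun i => ∫ a, F i a * g a ∂μ) l (𝓝 (c * ∫ a, g a ∂μ)) := by
  rw [← integral_const_mul]
  refine tendsto_integral_filter_of_dominated_convergence (fun a => C * ‖g a‖)
    ?_ ?_ (hg.norm.const_mul C) ?_
  · filter_upwards [hF_meas] with i hi using hi.mul hg.aestronglyMeasurable
  · filter_upwards [hF_le] with i hi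
    filter_upwards [hi] with a ha
    rw [norm_mul]
    exact mul_le_mul_of_nonneg_right ha (norm_nonneg _)
  · filter_upwards [hF_lim] with a ha using ha.mul_const _

theorem tendsto_gammaB {n : ℕ} {b : ℝ → ℂ} {c : ℂ} {C : ℝ} {l : Filter ℝ}
    [l.IsCountablyGenerated] (hb_meas : Measurable b) (hb_le : ∀ y, 0 < y → ‖b y‖ ≤ C)
    (hl : ∀ᶠ x in l, 0 < x) (hb_lim : ∀ y, 0 < y → Tendsto (fun x => b (y / (2 * x))) l (𝓝 c)) :
    Tendsto (gammaB n b) l (𝓝 (c • 1)) := by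
  refine tendsto_pi_nhds.2 fun j => tendsto_pi_nhds.2 fun k => ?_
  have horth : ∫ y in Ioi (0 : ℝ), ((laguerreFun j y * laguerreFun k y : ℝ) : ℂ) =
      if j = k then 1 else 0 := by
    rw [integral_complex_ofReal, integral_laguerreFun_mul_laguerreFun]
    simp only [Fin.val_inj]
    split_ifs <;> simp
  simp only [gammaB, NNT, Matrix.of_apply, Matrix.smul_apply, Matrix.one_apply, smul_eq_mul,
    ← horth]
  refine tendsto_integral_mul_of_norm_le (C := C) ?_ ?_ ?_ ?_
  · filter_upwards with x
    exact (hb_meas.comp (measurable_id.div_const _)).aestronglyMeasurable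
  · filter_upwards [hl] with x hx
    filter_upwards [ae_restrict_mem measurableSet_Ioi] with y hy
    exact hb_le _ (div_pos hy (by positivity))
  · exact (integrableOn_laguerreFun_mul_laguerreFun j k).ofReal
  · filter_upwards [ae_restrict_mem measurableSet_Ioi] with y hy using hb_lim y hy

theorem tendsto_div_two_mul_nhdsGT_zero_atTop {y : ℝ} (hy : 0 < y) :
    Tendsto (fun x : ℝ => y / (2 * x)) (𝓝[>] 0) atTop := by
  refine (tendsto_inv_nhdsGT_zero.const_mul_atTop (half_pos hy)).congr fun x => ?_
  ring

theorem tendsto_div_two_mul_atTop_nhdsGT_zero {y : ℝ} (hy : 0 < y) :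
    Tendsto (fun x : ℝ => y / (2 * x)) atTop (𝓝[>] 0) := by
  refine tendsto_nhdsWithin_iff.2 ⟨?_, ?_⟩
  · simpa [div_div] using (tendsto_const_nhds (x := y / 2)).div_atTop tendsto_id
  · filter_upwards [eventually_gt_atTop 0] with x hx
    exact div_pos hy (by positivity)

theorem gammaB_limits_general (n : ℕ) (b : ℝ → ℂ) (b₀ bInfty : ℂ)
    (hb_meas : Measurable b) (hb_bdd : ∃ C : ℝ, ∀ y : ℝ, 0 < y → ‖b y‖ ≤ C)
    (hb₀ : Tendsto b (𝓝[>] (0 : ℝ)) (𝓝 b₀))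
    (hbInfty : Tendsto b atTop (𝓝 bInfty)) :
    Tendsto (fun x₂ => gammaB n b x₂) (𝓝[>] (0 : ℝ))
        (𝓝 (bInfty • (1 : Matrix (Fin n) (Fin n) ℂ))) ∧
      Tendsto (fun x₂ => gammaB n b x₂) atTop
        (𝓝 (b₀ • (1 : Matrix (Fin n) (Fin n) ℂ))) := by
  obtain ⟨C, hC⟩ := hb_bdd
  exact ⟨tendsto_gammaB hb_meas hC self_mem_nhdsWithin fun y hy =>
      hbInfty.comp (tendsto_div_two_mul_nhdsGT_zero_atTop hy),
    tendsto_gammaB hb_meas hC (eventually_gt_atTop 0) fun y hy =>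
      hb₀.comp (tendsto_div_two_mul_atTop_nhdsGT_zero hy)⟩

/-- If `b : (0,∞) → ℂ` is bounded measurable with limits `b₀` at `0⁺`
and `bInfty` at `+∞`, then `γ^b(x₂) → bInfty • I` as `x₂ → 0⁺` and `γ^b(x₂) → b₀ • I`
as `x₂ → +∞`. -/
theorem gammaB_limits (n : ℕ) (hn : 1 ≤ n) (b : ℝ → ℂ) (b₀ bInfty : ℂ)
    (hb_meas : Measurable b) (hb_bdd : ∃ C : ℝ, ∀ y : ℝ, 0 < y → ‖b y‖ ≤ C)
    (hb₀ : Tendsto b (𝓝[>] (0 : ℝ)) (𝓝 b₀))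
    (hbInfty : Tendsto b atTop (𝓝 bInfty)) :
    Tendsto (fun x₂ => gammaB n b x₂) (𝓝[>] (0 : ℝ))
        (𝓝 (bInfty • (1 : Matrix (Fin n) (Fin n) ℂ))) ∧
      Tendsto (fun x₂ => gammaB n b x₂) atTop
        (𝓝 (b₀ • (1 : Matrix (Fin n) (Fin n) ℂ))) :=
  gammaB_limits_general n b b₀ bInfty hb_meas hb_bdd hb₀ hbInfty
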